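/- For every k and ℓ with 1 ≤ k ≤ ℓ, the coefficients a_p^{(k,ℓ)}(z) sum to 1: ∑_{p=0}^{k} a_p^{(k,ℓ)}(z) = 1. -/

import Mathlib

/-- The q²-deformed integer `[n]_{q²} = (1 - q^{2n})/(1 - q²)`. -/
noncomputable def qint {K : Type*} [Field K] (q : K) (n : ℕ) : K :=
  (1 - q ^ (2 * n)) / (1 - q ^ 2)

/-- The q²-deformed factorial. -/
noncomputable def qfact {K : Type*} [Field K] (q : K) : ℕ → K
  | 0 => 1
  | n + 1 => qfact q n * qint q (n + 1)

/-- The Gaussian binomial coefficient `binom(n,m)_{q²}`. -/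
noncomputable def qbinom {K : Type*} [Field K] (q : K) (n m : ℕ) : K :=
  qfact q n / (qfact q m * qfact q (n - m))

/-- The q-Pochhammer symbol `(a;q²)_n = ∏_{j=0}^{n-1} (1 - a q^{2j})`. -/
noncomputable def qpoch {K : Type*} [Field K] (q a : K) (n : ℕ) : K :=
  ∏ j ∈ Finset.range n, (1 - a * q ^ (2 * j))

lemma qpoch_succ {K : Type*} [Field K] (q a : K) (n : ℕ) :
    qpoch q a (n + 1) = qpoch q a n * (1 - a * q ^ (2 * n)) :=
  Finset.prod_range_succ _ _

lemma qfact_ne_zero {K : Type*} [Field K] {q : K}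
    (hint : ∀ n : ℕ, 1 ≤ n → qint q n ≠ 0) : ∀ n, qfact q n ≠ 0
  | 0 => one_ne_zero
  | n + 1 => mul_ne_zero (qfact_ne_zero hint n) (hint (n+1) (Nat.le_add_left 1 n))

lemma qint_pascal {K : Type*} [Field K] (q : K) (p k : ℕ) (h : p ≤ k) :
    qint q (k + 1) = q ^ (2 * (k - p)) * qint q (p + 1) + qint q (k - p) := by
  unfold qint
  rw [← mul_div_assoc, ← add_div]
  congr 1
  have e : q ^ (2 * (k - p)) * q ^ (2 * (p + 1)) = q ^ (2 * (k + 1)) := by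
    rw [← pow_add]; congr 1; omega
  linear_combination e

lemma qbinom_pascal {K : Type*} [Field K] {q : K}
    (hint : ∀ n : ℕ, 1 ≤ n → qint q n ≠ 0) (p k : ℕ) (h : p + 1 ≤ k) :
    qbinom q (k + 1) (p + 1) = qbinom q k (p + 1) + q ^ (2 * (k - p)) * qbinom q k p := by
  have hf := qfact_ne_zero hint
  obtain ⟨m, hm⟩ : ∃ m, k - p = m + 1 := ⟨k - p - 1, by omega⟩
  have e1 : k + 1 - (p + 1) = m + 1 := by omega
  have e2 : k - (p + 1) = m := by omega
  unfold qbinom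
  rw [e1, e2, hm, show qfact q (k+1) = qfact q k * qint q (k+1) from rfl,
    show qfact q (m+1) = qfact q m * qint q (m+1) from rfl,
    show qfact q (p+1) = qfact q p * qint q (p+1) from rfl]
  have hpas := qint_pascal q p k (by omega)
  rw [hm] at hpas
  have h1 : qint q (p + 1) ≠ 0 := hint _ (by omega)
  have h2 : qint q (m + 1) ≠ 0 := hint _ (by omega)
  have h3 := hf p
  have h4 := hf m
  field_simp
  linear_combination qfact q k * hpas

lemma qbinom_self {K : Type*} [Field K] {q : K}
    (hint : ∀ n : ℕ, 1 ≤ n → qint q n ≠ 0) (k : ℕ) : qbinom q k k = 1 := by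
  unfold qbinom
  rw [Nat.sub_self]
  simp [qfact, div_self (qfact_ne_zero hint k)]

lemma qbinom_zero {K : Type*} [Field K] {q : K}
    (hint : ∀ n : ℕ, 1 ≤ n → qint q n ≠ 0) (k : ℕ) : qbinom q k 0 = 1 := by
  unfold qbinom
  simp [qfact, div_self (qfact_ne_zero hint k)]

lemma key_sum {K : Type*} [Field K] (q z w : K)
    (hint : ∀ n : ℕ, 1 ≤ n → qint q n ≠ 0) :
    ∀ k : ℕ, ∑ p ∈ Finset.range (k + 1),
      qbinom q k p * w ^ p * qpoch q w (k - p) * qpoch q z p = qpoch q (z * w) k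
  | 0 => by simp [qpoch, qbinom_zero hint]
  | k + 1 => by
    have hf := qfact_ne_zero hint
    set T : ℕ → K := fun p => qbinom q (k+1) p * w ^ p * qpoch q w (k+1-p) * qpoch q z p with hT
    set A : ℕ → K := fun p => if p ≤ k then qbinom q k p * w ^ p * qpoch q w (k+1-p) * qpoch q z p else 0 with hA
    set B : ℕ → K := fun p => q ^ (2*(k-p)) * qbinom q k p * w ^ (p+1) * qpoch q w (k-p) * qpoch q z (p+1) with hB
    have claim1 : ∀ p ∈ Finset.range (k+1), T (p+1) = A (p+1) + B p := by
      intro p hp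
      rw [Finset.mem_range] at hp
      rcases Nat.lt_or_ge p k with hpk | hpk
      · -- p < k, so p+1 ≤ k
        simp only [hT, hA, hB, if_pos (by omega : p + 1 ≤ k)]
        rw [qbinom_pascal hint p k (by omega), show k + 1 - (p+1) = k - p from by omega]
        ring
      · -- p = k
        have hpk' : p = k := by omega
        subst hpk'
        simp only [hT, hA, hB, if_neg (by omega : ¬ p + 1 ≤ p), Nat.sub_self]
        rw [qbinom_self hint, qbinom_self hint]
        ring
    have claim2 : ∀ p ∈ Finset.range (k+1), A p + B p =
        (qbinom q k p * w ^ p * qpoch q w (k-p) * qpoch q z p) * (1 - z * w * q ^ (2*k)) := by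
      intro p hp
      rw [Finset.mem_range] at hp
      simp only [hA, hB, if_pos (by omega : p ≤ k)]
      rw [show k + 1 - p = (k - p) + 1 from by omega, qpoch_succ, qpoch_succ]
      have e : q ^ (2*(k-p)) * q ^ (2*p) = q ^ (2*k) := by
        rw [← pow_add]; congr 1; omega
      linear_combination (- qbinom q k p * w ^ (p+1) * qpoch q w (k-p) * qpoch q z p * z) * e
    have hT0 : T 0 = A 0 := by
      simp only [hT, hA, if_pos (Nat.zero_le k)]
      rw [qbinom_zero hint, qbinom_zero hint]
    calc ∑ p ∈ Finset.range (k+1+1), T p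
        = (∑ p ∈ Finset.range (k+1), T (p+1)) + T 0 := Finset.sum_range_succ' T (k+1)
      _ = (∑ p ∈ Finset.range (k+1), (A (p+1) + B p)) + A 0 := by
          rw [Finset.sum_congr rfl claim1, hT0]
      _ = ((∑ p ∈ Finset.range (k+1), A (p+1)) + A 0) + ∑ p ∈ Finset.range (k+1), B p := by
          rw [Finset.sum_add_distrib]; ring
      _ = (∑ p ∈ Finset.range (k+1+1), A p) + ∑ p ∈ Finset.range (k+1), B p := by
          rw [Finset.sum_range_succ' A (k+1)]
      _ = (∑ p ∈ Finset.range (k+1), A p) + ∑ p ∈ Finset.range (k+1), B p := by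
          rw [Finset.sum_range_succ]
          simp [hA]
      _ = ∑ p ∈ Finset.range (k+1), (A p + B p) := (Finset.sum_add_distrib).symm
      _ = ∑ p ∈ Finset.range (k+1),
            (qbinom q k p * w ^ p * qpoch q w (k-p) * qpoch q z p) * (1 - z * w * q ^ (2*k)) :=
          Finset.sum_congr rfl claim2
      _ = (∑ p ∈ Finset.range (k+1),
            qbinom q k p * w ^ p * qpoch q w (k-p) * qpoch q z p) * (1 - z * w * q ^ (2*k)) :=
          (Finset.sum_mul _ _ _).symm
      _ = qpoch q (z * w) k * (1 - z * w * q ^ (2*k)) := by rw [key_sum q z w hint k]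
      _ = qpoch q (z * w) (k+1) := (qpoch_succ q (z*w) k).symm

/-- For `1 ≤ k ≤ ℓ`, the coefficients
`a_p^{(k,ℓ)}(z) = binom(k,p)_{q²} q^{-2ℓp} (q^{-2ℓ};q²)_{k-p} (z;q²)_p / (zq^{-2ℓ};q²)_k`
sum to 1 over `p = 0, …, k`. -/
theorem a_coeffs_sum_to_one {K : Type*} [Field K] (q z : K)
    (hq0 : q ≠ 0) (hq : q ^ 2 ≠ 1) (hint : ∀ n : ℕ, 1 ≤ n → qint q n ≠ 0)
    (k ℓ : ℕ) (hk : 1 ≤ k) (hkl : k ≤ ℓ)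
    (hden : qpoch q (z * (q ^ (2 * ℓ))⁻¹) k ≠ 0) :
    ∑ p ∈ Finset.range (k + 1),
      qbinom q k p * (q ^ (2 * ℓ))⁻¹ ^ p *
        qpoch q ((q ^ (2 * ℓ))⁻¹) (k - p) * qpoch q z p /
        qpoch q (z * (q ^ (2 * ℓ))⁻¹) k = 1 := by
  rw [← Finset.sum_div, key_sum q z ((q ^ (2 * ℓ))⁻¹) hint k, div_self hden]
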